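/- Let G₁ be the contextuality scenario with vertex set {x₁,x₂,x₃} and edges {x₁,x₂}, {x₂,x₃}, {x₁,x₃}, and let H be a complex Hilbert space. (a) If (A₁,A₂,A₃) is a positive operator representation of G₁ on H, then A₁ = A₂ = A₃ = (1/2)·I_H. (b) If H ≠ {0}, then G₁ admits no projective representation on H: there are no orthogonal projections P₁,P₂,P₃ on H with P₁+P₂ = P₂+P₃ = P₁+P₃ = I_H. Consequently, no positive operator representation of G₁ on a nonzero Hilbert space dilates to a projective representation, so G₁ is not dilating. -/

import Mathlib

/-! Subtracting one edge equation from the sum of the other two gives `2 • A i = 1`, so every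
operator of a POR of `G₁` is `1/2`. As `1/2` is not idempotent, `G₁` has no projective
representation on a nonzero space, and neither has any space into which a nonzero one embeds
isometrically; the POR `1/2` on `ℂ` therefore does not dilate. -/

noncomputable section

structure HilbertC where
  carrier : Type
  [normed : NormedAddCommGroup carrier]
  [ips : InnerProductSpace ℂ carrier]
  [complete : CompleteSpace carrier]

attribute [instance] HilbertC.normed HilbertC.ips HilbertC.complete

/-- A positive operator representation of the hypergraph with edge set `E`. -/
def IsPOR {V : Type} [Fintype V] (E : Finset (Finset V)) {H : Type}
    [NormedAddCommGroup H] [InnerProductSpace ℂ H] [CompleteSpace H]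
    (A : V → H →L[ℂ] H) : Prop :=
  (∀ x, (A x).IsPositive) ∧ ∀ e ∈ E, ∑ x ∈ e, A x = 1

/-- A projective representation of the hypergraph with edge set `E`. -/
def IsPR {V : Type} [Fintype V] (E : Finset (Finset V)) {H : Type}
    [NormedAddCommGroup H] [InnerProductSpace ℂ H] [CompleteSpace H]
    (A : V → H →L[ℂ] H) : Prop :=
  (∀ x, IsSelfAdjoint (A x) ∧ IsIdempotentElem (A x)) ∧ ∀ e ∈ E, ∑ x ∈ e, A x = 1

/-- The POR `A` dilates to a projective representation. -/
def DilatesToPR {V : Type} [Fintype V] (E : Finset (Finset V)) {H : Type}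
    [NormedAddCommGroup H] [InnerProductSpace ℂ H] [CompleteSpace H]
    (A : V → H →L[ℂ] H) : Prop :=
  ∃ (K : HilbertC) (B : V → K.carrier →L[ℂ] K.carrier) (Vi : H →L[ℂ] K.carrier),
    IsPR E B ∧ Isometry Vi ∧
    ∀ x, A x = (ContinuousLinearMap.adjoint Vi).comp ((B x).comp Vi)

/-- The hypergraph `(V, E)` is dilating. -/
def Dilating (V : Type) [Fintype V] (E : Finset (Finset V)) : Prop :=
  ∀ (H : HilbertC) (A : V → H.carrier →L[ℂ] H.carrier), IsPOR E A → DilatesToPR E A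

/-- The contextuality scenario `G₁`: three vertices, edges `{x₁,x₂}`, `{x₂,x₃}`, `{x₁,x₃}`. -/
def E1 : Finset (Finset (Fin 3)) := {{0, 1}, {1, 2}, {0, 2}}

section HalfSum

variable {𝕜 M : Type*} [DivisionRing 𝕜] [NeZero (2 : 𝕜)] [AddCommGroup M] [Module 𝕜 M]

theorem eq_half_smul_of_add_eq {a b c u : M} (hab : a + b = u) (hbc : b + c = u)
    (hac : a + c = u) : a = (1 / 2 : 𝕜) • u := by
  have two_a : (2 : 𝕜) • a = u := by
    rw [two_smul]
    calc a + a = (a + b) + (a + c) - (b + c) := by abel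
      _ = u := by rw [hab, hac, hbc]; abel
  rw [← two_a, smul_smul, one_div, inv_mul_cancel₀ two_ne_zero, one_smul]

theorem sum_E1_iff {N : Type*} [AddCommMonoid N] (A : Fin 3 → N) (u : N) :
    (∀ e ∈ E1, ∑ x ∈ e, A x = u) ↔ A 0 + A 1 = u ∧ A 1 + A 2 = u ∧ A 0 + A 2 = u := by
  simp [E1]

theorem eq_half_smul_of_sum_E1 {A : Fin 3 → M} {u : M} (hA : ∀ e ∈ E1, ∑ x ∈ e, A x = u)
    (i : Fin 3) : A i = (1 / 2 : 𝕜) • u := by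
  obtain ⟨h01, h12, h02⟩ := (sum_E1_iff A u).1 hA
  fin_cases i
  · exact eq_half_smul_of_add_eq h01 h12 h02
  · exact eq_half_smul_of_add_eq ((add_comm _ _).trans h01) h02 h12
  · exact eq_half_smul_of_add_eq ((add_comm _ _).trans h02) h01 ((add_comm _ _).trans h12)

end HalfSum

theorem not_isIdempotentElem_half {𝕜 : Type*} [Field 𝕜] [NeZero (2 : 𝕜)] :
    ¬ IsIdempotentElem (1 / 2 : 𝕜) := by
  simp only [IsIdempotentElem.iff_eq_zero_or_one, one_div, inv_eq_zero, inv_eq_one, two_ne_zero,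
    false_or]
  exact fun h => one_ne_zero (add_eq_left.1 (one_add_one_eq_two.trans h))

theorem not_isIdempotentElem_half_smul_one {𝕜 R : Type*} [Field 𝕜] [NeZero (2 : 𝕜)]
    [Ring R] [Nontrivial R] [Algebra 𝕜 R] : ¬ IsIdempotentElem ((1 / 2 : 𝕜) • (1 : R)) := by
  rw [← Algebra.algebraMap_eq_smul_one, IsIdempotentElem, ← map_mul,
    (algebraMap 𝕜 R).injective.eq_iff]
  exact not_isIdempotentElem_half

section Hilbert

variable {H : Type} [NormedAddCommGroup H] [InnerProductSpace ℂ H] [CompleteSpace H]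

theorem not_isPR_E1 [Nontrivial H] (P : Fin 3 → H →L[ℂ] H) : ¬ IsPR E1 P := fun hP =>
  not_isIdempotentElem_half_smul_one (eq_half_smul_of_sum_E1 (𝕜 := ℂ) hP.2 0 ▸ (hP.1 0).2)

theorem not_dilatesToPR_E1 [Nontrivial H] (A : Fin 3 → H →L[ℂ] H) : ¬ DilatesToPR E1 A := by
  rintro ⟨K, B, Vi, hB, hVi, -⟩
  have : Nontrivial K.carrier := hVi.injective.nontrivial
  exact not_isPR_E1 B hB

open scoped ComplexOrder in
theorem isPOR_E1_half_smul_one :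
    IsPOR E1 (fun _ : Fin 3 => (1 / 2 : ℂ) • (1 : H →L[ℂ] H)) := by
  refine ⟨fun _ => ContinuousLinearMap.isPositive_one.smul_of_nonneg (by positivity), ?_⟩
  rw [sum_E1_iff, ← add_smul (1 / 2 : ℂ)]
  norm_num

end Hilbert

theorem stmt11 (H : Type) [NormedAddCommGroup H] [InnerProductSpace ℂ H] [CompleteSpace H] :
    (∀ A : Fin 3 → H →L[ℂ] H, IsPOR E1 A →
      ∀ i, A i = (1 / 2 : ℂ) • (1 : H →L[ℂ] H)) ∧
    (Nontrivial H → ¬ ∃ P : Fin 3 → H →L[ℂ] H, IsPR E1 P) ∧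
    (Nontrivial H → ∀ A : Fin 3 → H →L[ℂ] H, IsPOR E1 A → ¬ DilatesToPR E1 A) ∧
    ¬ Dilating (Fin 3) E1 :=
  ⟨fun _ hA => eq_half_smul_of_sum_E1 hA.2,
    fun _ ⟨P, hP⟩ => not_isPR_E1 P hP,
    fun _ A _ => not_dilatesToPR_E1 A,
    fun hE1 => not_dilatesToPR_E1 _ (hE1 ⟨ℂ⟩ _ isPOR_E1_half_smul_one)⟩
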